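/- arXiv:1910.01044 — 5 statements merged into one kernel-verified Lean document; each statement's English description precedes it below -/
import Mathlib

section
/- Let q : ℝ → ℝ be a measurable function with q ≥ 0 and ∫_ℝ q(s) ds = 1, such that s ↦ s·q(s) is integrable, with mean s₀ := ∫_ℝ s·q(s) ds, and assume the second moment is finite: ∫_ℝ (s − s₀)²·q(s) ds < ∞. Then for every v ∈ ℝ, the function (K, s) ↦ e^{ivK}·(s − K)·(1_{{s > K}} − 1_{{s₀ > K}})·q(s) is integrable on ℝ², and the iterated integrals coincide: ∫_ℝ e^{ivK} · ( ∫_ℝ (s − K)·(1_{{s > K}} − 1_{{s₀ > K}})·q(s) ds ) dK = ∫_ℝ q(s) · ( ∫_{s₀}^{s} e^{ivK}·(s − K) dK ) ds. -/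
/-!
On the interval between `s₀` and `s`, the difference of indicators `1_{K < s} - 1_{K < s₀}` is
`±1` with the sign of `s - K`, and it vanishes elsewhere. Hence the absolute value of the
integrand has `K`-integral `(s - s₀)² |q s| / 2`, which is integrable in `s` by the finite second
moment, so Fubini applies; the inner `K`-integral is then the oriented integral from `s₀` to `s`.
-/

open MeasureTheory Set

noncomputable def signedIntervalIndicator (a b K : ℝ) : ℝ :=
  (if K < b then 1 else 0) - (if K < a then 1 else 0)

section SignedIntervalIndicator

variable {E : Type*} [NormedAddCommGroup E] [NormedSpace ℝ E]

lemma signedIntervalIndicator_smul (a b K : ℝ) (g : ℝ → E) :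
    signedIntervalIndicator a b K • g K =
      (Ico a b).indicator g K - (Ico b a).indicator g K := by
  simp only [signedIntervalIndicator, indicator_apply, mem_Ico]
  split_ifs <;> simp <;> grind

lemma signedIntervalIndicator_mul_sub_nonneg (a b K : ℝ) :
    0 ≤ signedIntervalIndicator a b K * (b - K) := by
  unfold signedIntervalIndicator
  split_ifs <;> nlinarith

lemma integral_signedIntervalIndicator_smul (a b : ℝ) (g : ℝ → E) :
    ∫ K, signedIntervalIndicator a b K • g K = ∫ K in a..b, g K := by
  simp_rw [signedIntervalIndicator_smul]
  rcases le_or_gt a b with hab | hba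
  · simp [Ico_eq_empty_of_le hab, integral_indicator measurableSet_Ico,
      setIntegral_congr_set Ico_ae_eq_Ioc, intervalIntegral.integral_of_le hab]
  · simp [Ico_eq_empty_of_le hba.le, integral_neg, integral_indicator measurableSet_Ico,
      setIntegral_congr_set Ico_ae_eq_Ioc, intervalIntegral.integral_of_ge hba.le]

lemma integrable_signedIntervalIndicator_smul {a b : ℝ} {g : ℝ → E}
    (hg : IntervalIntegrable g volume a b) :
    Integrable fun K => signedIntervalIndicator a b K • g K := by
  simp_rw [signedIntervalIndicator_smul]
  exact ((integrableOn_congr_set_ae Ico_ae_eq_Ioc).2 hg.1).integrable_indicator measurableSet_Ico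
    |>.sub (((integrableOn_congr_set_ae Ico_ae_eq_Ioc).2 hg.2).integrable_indicator
      measurableSet_Ico)

end SignedIntervalIndicator

lemma integral_upper_sub_id (a b : ℝ) : ∫ K in a..b, (b - K) = (b - a) ^ 2 / 2 := by
  simp [intervalIntegral.integral_comp_sub_left (fun x => x)]

lemma integrable_prod_sub_mul_signedIntervalIndicator_mul {q : ℝ → ℝ} (hq : Measurable q)
    {s₀ : ℝ} (hvar : Integrable fun s => (s - s₀) ^ 2 * q s) :
    Integrable (fun p : ℝ × ℝ => (p.2 - p.1) * signedIntervalIndicator s₀ p.2 p.1 * q p.2)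
      (volume.prod volume) := by
  have hmeas : Measurable fun p : ℝ × ℝ => signedIntervalIndicator s₀ p.2 p.1 :=
    (measurable_const.ite (measurableSet_lt measurable_fst measurable_snd) measurable_const).sub
      (measurable_const.ite (measurableSet_lt measurable_fst measurable_const) measurable_const)
  have hslice (s : ℝ) : ∫ K, ‖(s - K) * signedIntervalIndicator s₀ s K * q s‖ =
      (s - s₀) ^ 2 / 2 * |q s| := by
    calc ∫ K, ‖(s - K) * signedIntervalIndicator s₀ s K * q s‖
        = ∫ K, signedIntervalIndicator s₀ s K • (s - K) * |q s| := by
          congr 1; ext K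
          rw [norm_mul, mul_comm (s - K), Real.norm_eq_abs, Real.norm_eq_abs,
            abs_of_nonneg (signedIntervalIndicator_mul_sub_nonneg s₀ s K), smul_eq_mul]
      _ = (s - s₀) ^ 2 / 2 * |q s| := by
          rw [integral_mul_const, integral_signedIntervalIndicator_smul, integral_upper_sub_id]
  refine (integrable_prod_iff' ?_).2 ⟨.of_forall fun s => ?_, ?_⟩
  · exact (((measurable_snd.sub measurable_fst).mul hmeas).mul
      (hq.comp measurable_snd)).aestronglyMeasurable
  · refine (integrable_signedIntervalIndicator_smul
      ((by fun_prop : Continuous fun K => (s - K) * q s).intervalIntegrable s₀ s)).congr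
      (.of_forall fun K => ?_)
    simp only [smul_eq_mul]; ring
  · simp_rw [hslice]
    exact (hvar.norm.div_const 2).congr (.of_forall fun s => by
      simp only [norm_mul, norm_pow, Real.norm_eq_abs, sq_abs]; ring)

theorem carr_madan_fubini_interchange_general
    (q : ℝ → ℝ) (hq_meas : Measurable q)
    (s₀ : ℝ)
    (hvar : Integrable (fun s => (s - s₀) ^ 2 * q s)) (v : ℝ) :
    Integrable (fun p : ℝ × ℝ =>
      Complex.exp (Complex.I * (v : ℂ) * (p.1 : ℂ)) *
        (((p.2 - p.1) * ((if p.1 < p.2 then (1 : ℝ) else 0) -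
          (if p.1 < s₀ then (1 : ℝ) else 0)) * q p.2 : ℝ) : ℂ)) ∧
    ∫ K : ℝ, Complex.exp (Complex.I * (v : ℂ) * (K : ℂ)) *
        ((∫ s : ℝ, (s - K) * ((if K < s then (1 : ℝ) else 0) -
          (if K < s₀ then (1 : ℝ) else 0)) * q s : ℝ) : ℂ) =
      ∫ s : ℝ, ((q s : ℝ) : ℂ) *
        ∫ K in s₀..s, Complex.exp (Complex.I * (v : ℂ) * (K : ℂ)) * ((s : ℂ) - (K : ℂ)) := by
  have hG : Integrable (fun p : ℝ × ℝ => Complex.exp (Complex.I * v * p.1) *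
      (((p.2 - p.1) * signedIntervalIndicator s₀ p.2 p.1 * q p.2 : ℝ) : ℂ))
      (volume.prod volume) :=
    (integrable_prod_sub_mul_signedIntervalIndicator_mul hq_meas hvar).ofReal.bdd_mul (c := 1)
      (by fun_prop)
      (.of_forall fun p => by rw [mul_assoc, ← Complex.ofReal_mul, Complex.norm_exp_I_mul_ofReal])
  refine ⟨hG, ?_⟩
  calc _ = ∫ K : ℝ, ∫ s : ℝ, Complex.exp (Complex.I * v * K) *
          (((s - K) * signedIntervalIndicator s₀ s K * q s : ℝ) : ℂ) := by
        congr 1; ext K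
        rw [← integral_complex_ofReal, ← integral_const_mul]; rfl
    _ = ∫ s : ℝ, ∫ K : ℝ, Complex.exp (Complex.I * v * K) *
          (((s - K) * signedIntervalIndicator s₀ s K * q s : ℝ) : ℂ) :=
        integral_integral_swap hG
    _ = _ := by
        congr 1; ext s
        rw [← integral_signedIntervalIndicator_smul, ← integral_const_mul]
        congr 1; ext K
        simp only [Complex.real_smul]; push_cast; ring

theorem carr_madan_fubini_interchange
    (q : ℝ → ℝ) (hq_meas : Measurable q) (hq_nonneg : ∀ s, 0 ≤ q s)
    (hq_prob : ∫ s, q s = 1)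
    (hq_mean : Integrable (fun s => s * q s))
    (s₀ : ℝ) (hs₀ : s₀ = ∫ s, s * q s)
    (hvar : Integrable (fun s => (s - s₀) ^ 2 * q s)) (v : ℝ) :
    Integrable (fun p : ℝ × ℝ =>
      Complex.exp (Complex.I * (v : ℂ) * (p.1 : ℂ)) *
        (((p.2 - p.1) * ((if p.1 < p.2 then (1 : ℝ) else 0) -
          (if p.1 < s₀ then (1 : ℝ) else 0)) * q p.2 : ℝ) : ℂ)) ∧
    ∫ K : ℝ, Complex.exp (Complex.I * (v : ℂ) * (K : ℂ)) *
        ((∫ s : ℝ, (s - K) * ((if K < s then (1 : ℝ) else 0) -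
          (if K < s₀ then (1 : ℝ) else 0)) * q s : ℝ) : ℂ) =
      ∫ s : ℝ, ((q s : ℝ) : ℂ) *
        ∫ K in s₀..s, Complex.exp (Complex.I * (v : ℂ) * (K : ℂ)) * ((s : ℂ) - (K : ℂ)) :=
  carr_madan_fubini_interchange_general q hq_meas s₀ hvar v
end

section
/- Let q : ℝ → ℝ be a measurable function with q ≥ 0 and ∫_ℝ q(s) ds = 1, such that s ↦ s·q(s) is integrable, with mean s₀ := ∫_ℝ s·q(s) ds, and assume ∫_ℝ (s − s₀)²·q(s) ds < ∞. Define z(K) := ∫_ℝ max(s − K, 0)·q(s) ds − max(s₀ − K, 0) and Ψ(v) := ∫_ℝ e^{iv(s − s₀)}·q(s) ds. Then for every v ∈ ℝ with v ≠ 0, ∫_ℝ e^{ivK}·z(K) dK = e^{iv s₀}·(1 − Ψ(v))/v². -/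
/-!
Write `R(s, K) = (s - K)⁺ - (s₀ - K)⁺ - 𝟙[K ≤ s₀] (s - s₀)` for the error of the first-order
Taylor expansion of the call payoff `s ↦ (s - K)⁺` at `s₀`. Since `q` has mean `s₀`, the linear
term integrates to zero, so `z K = ∫ R(s, K) q(s) ds`. For fixed `s`, `K ↦ R(s, K)` is the tent
`|s - K|` on the interval between `s₀` and `s`, hence nonnegative with
`∫ R(s, K) dK = (s - s₀)² / 2` and, for `c ≠ 0`,
`∫ e^{cK} R(s, K) dK = (e^{cs} - e^{cs₀} (1 + c (s - s₀))) / c²`.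
The first identity and the finite variance justify Fubini; integrating the second against `q`
with `c = iv` gives `e^{ivs₀} (Ψ(v) - 1) / (iv)²`.
-/

open MeasureTheory Set

/-- Expanding with the right derivative `𝟙[K ≤ s₀]` of the payoff (not `𝟙[K < s₀]`) makes
`K ↦ callRemainder s₀ s K` an indicator of `Ioc` intervals, matching the interval integral. -/
noncomputable def callRemainder (s₀ s K : ℝ) : ℝ :=
  max (s - K) 0 - max (s₀ - K) 0 - if K ≤ s₀ then s - s₀ else 0

lemma callRemainder_eq_indicator (s₀ s K : ℝ) :
    callRemainder s₀ s K =
      (Ioc s₀ s).indicator (fun K => s - K) K + (Ioc s s₀).indicator (fun K => K - s) K := by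
  simp only [callRemainder, indicator, mem_Ioc, max_def]
  split_ifs <;> grind

lemma callRemainder_nonneg (s₀ s K : ℝ) : 0 ≤ callRemainder s₀ s K := by
  rw [callRemainder_eq_indicator]
  exact add_nonneg (indicator_nonneg (fun K hK => sub_nonneg.2 hK.2) K)
    (indicator_nonneg (fun K hK => sub_nonneg.2 hK.1.le) K)

lemma measurable_callRemainder_uncurry (s₀ : ℝ) :
    Measurable fun p : ℝ × ℝ => callRemainder s₀ p.1 p.2 :=
  Measurable.sub (by fun_prop) <|
    Measurable.ite (measurableSet_le measurable_snd measurable_const) (by fun_prop)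
      measurable_const

lemma integrable_callRemainder (s₀ s : ℝ) : Integrable (callRemainder s₀ s) := by
  simp_rw [funext (callRemainder_eq_indicator s₀ s)]
  exact ((continuous_const.sub continuous_id).integrableOn_Ioc.integrable_indicator
    measurableSet_Ioc).add
      ((continuous_id.sub continuous_const).integrableOn_Ioc.integrable_indicator measurableSet_Ioc)

lemma integral_callRemainder_smul {E : Type*} [NormedAddCommGroup E] [NormedSpace ℝ E]
    {f : ℝ → E} (hf : Continuous f) (s₀ s : ℝ) :
    ∫ K, callRemainder s₀ s K • f K = ∫ K in s₀..s, (s - K) • f K := by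
  have hcont : Continuous fun K => (s - K) • f K := by fun_prop
  have hpiece : ∀ a b, Integrable ((Ioc a b).indicator fun K => (s - K) • f K) :=
    fun a b => hcont.integrableOn_Ioc.integrable_indicator measurableSet_Ioc
  have hsplit : (fun K => callRemainder s₀ s K • f K) = fun K =>
      (Ioc s₀ s).indicator (fun K => (s - K) • f K) K -
        (Ioc s s₀).indicator (fun K => (s - K) • f K) K := by
    ext K
    simp only [callRemainder_eq_indicator, indicator]
    split_ifs <;> module
  rw [hsplit, integral_sub (hpiece _ _) (hpiece _ _), integral_indicator measurableSet_Ioc,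
    integral_indicator measurableSet_Ioc, intervalIntegral.eq_1]

lemma integral_callRemainder (s₀ s : ℝ) : ∫ K, callRemainder s₀ s K = (s - s₀) ^ 2 / 2 := by
  have h := integral_callRemainder_smul (f := fun _ => (1 : ℝ)) continuous_const s₀ s
  simp only [smul_eq_mul, mul_one] at h
  rw [h, intervalIntegral.integral_comp_sub_left (fun K => K), integral_id]
  ring

lemma integral_callRemainder_smul_cexp {c : ℂ} (hc : c ≠ 0) (s₀ s : ℝ) :
    ∫ K, callRemainder s₀ s K • Complex.exp (c * K) =
      (Complex.exp (c * s) - Complex.exp (c * s₀) * (1 + c * (s - s₀))) / c ^ 2 := by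
  have hderiv : ∀ K : ℝ, HasDerivAt (fun x : ℝ => Complex.exp (c * x) * (c * (s - x) + 1) / c ^ 2)
      ((s - K) • Complex.exp (c * K)) K := by
    intro K
    have h := ((((hasDerivAt_id (K : ℂ)).const_mul c).cexp.mul
      ((((hasDerivAt_id (K : ℂ)).const_sub (s : ℂ)).const_mul c).add_const 1)).div_const
        (c ^ 2)).comp_ofReal
    convert h using 1
    · rfl
    rw [Complex.real_smul, id]
    push_cast
    field_simp
    ring
  rw [integral_callRemainder_smul (by fun_prop),
    intervalIntegral.integral_eq_sub_of_hasDerivAt (fun K _ => hderiv K)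
      (Continuous.intervalIntegrable (by fun_prop) _ _)]
  ring

lemma norm_cexp_I_mul_ofReal_mul (v x : ℝ) : ‖Complex.exp (Complex.I * v * x)‖ = 1 := by
  rw [mul_assoc, ← Complex.ofReal_mul, Complex.norm_exp_I_mul_ofReal]

section

variable {μ : Measure ℝ} {q : ℝ → ℝ} {s₀ : ℝ}

lemma integral_sub_mul_eq_zero (hq : Integrable q μ) (hsq : Integrable (fun s => s * q s) μ)
    (hprob : ∫ s, q s ∂μ = 1) (hmean : ∫ s, s * q s ∂μ = s₀) :
    ∫ s, (s - s₀) * q s ∂μ = 0 := by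
  simp_rw [sub_mul]
  rw [integral_sub hsq (hq.const_mul s₀), integral_const_mul, hprob, hmean, mul_one, sub_self]

lemma integrable_max_sub_mul (hq : Integrable q μ) (hsq : Integrable (fun s => s * q s) μ) (K : ℝ) :
    Integrable (fun s => max (s - K) 0 * q s) μ := by
  refine (hsq.norm.add (hq.norm.const_mul |K|)).mono'
    ((continuous_id.sub continuous_const).max continuous_const |>.aestronglyMeasurable.mul
      hq.aestronglyMeasurable) (ae_of_all _ fun s => ?_)
  have hmax : |max (s - K) 0| ≤ |s| + |K| :=
    abs_le.2 ⟨by linarith [abs_nonneg s, abs_nonneg K, le_max_right (s - K) 0],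
      max_le (by linarith [le_abs_self s, neg_abs_le K]) (by positivity)⟩
  simp only [Pi.add_apply, norm_mul, Real.norm_eq_abs, ← add_mul]
  exact mul_le_mul_of_nonneg_right hmax (abs_nonneg _)

lemma integral_callRemainder_mul (hq : Integrable q μ) (hsq : Integrable (fun s => s * q s) μ)
    (hprob : ∫ s, q s ∂μ = 1) (hmean : ∫ s, s * q s ∂μ = s₀) (K : ℝ) :
    ∫ s, callRemainder s₀ s K * q s ∂μ = (∫ s, max (s - K) 0 * q s ∂μ) - max (s₀ - K) 0 := by
  have hcentered : Integrable (fun s => (s - s₀) * q s) μ := by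
    simp_rw [sub_mul]
    exact hsq.sub (hq.const_mul s₀)
  have hlin_int : Integrable (fun s => (if K ≤ s₀ then s - s₀ else 0) * q s) μ := by
    split_ifs
    · exact hcentered
    · simp
  have hlin : ∫ s, (if K ≤ s₀ then s - s₀ else 0) * q s ∂μ = 0 := by
    split_ifs
    · exact integral_sub_mul_eq_zero hq hsq hprob hmean
    · simp
  have hcall_int : Integrable (fun s => max (s - K) 0 * q s - max (s₀ - K) 0 * q s) μ :=
    (integrable_max_sub_mul hq hsq K).sub (hq.const_mul _)
  simp only [callRemainder, sub_mul]
  rw [integral_sub hcall_int hlin_int, integral_sub (integrable_max_sub_mul hq hsq K) (hq.const_mul _),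
    integral_const_mul, hprob, hlin]
  ring

lemma integrable_callRemainder_mul_prod [SFinite μ] (hq : AEStronglyMeasurable q μ)
    (hvar : Integrable (fun s => (s - s₀) ^ 2 * q s) μ) :
    Integrable (fun p : ℝ × ℝ => callRemainder s₀ p.1 p.2 * q p.1) (μ.prod volume) := by
  have hmeas : AEStronglyMeasurable (fun p : ℝ × ℝ => callRemainder s₀ p.1 p.2 * q p.1)
      (μ.prod volume) :=
    (measurable_callRemainder_uncurry s₀).aestronglyMeasurable.mul hq.comp_fst
  refine (integrable_prod_iff hmeas).2
    ⟨ae_of_all _ fun s => (integrable_callRemainder s₀ s).mul_const (q s), ?_⟩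
  have hnorm : ∀ s, ∫ K, ‖callRemainder s₀ s K * q s‖ = ‖(s - s₀) ^ 2 * q s‖ / 2 := by
    intro s
    simp_rw [norm_mul, Real.norm_of_nonneg (callRemainder_nonneg _ _ _)]
    rw [integral_mul_const, integral_callRemainder, Real.norm_of_nonneg (sq_nonneg _)]
    ring
  simpa only [hnorm] using hvar.norm.div_const 2

lemma integral_integral_callRemainder_smul_comm {E : Type*} [NormedAddCommGroup E]
    [NormedSpace ℝ E] [CompleteSpace E] [SFinite μ] (hq : AEStronglyMeasurable q μ)
    (hvar : Integrable (fun s => (s - s₀) ^ 2 * q s) μ) {f : ℝ → E} (hf : Continuous f) {C : ℝ}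
    (hfC : ∀ K, ‖f K‖ ≤ C) :
    ∫ K, (∫ s, callRemainder s₀ s K * q s ∂μ) • f K =
      ∫ s, q s • (∫ K, callRemainder s₀ s K • f K) ∂μ := by
  have hF : Integrable (Function.uncurry fun s K => (callRemainder s₀ s K * q s) • f K)
      (μ.prod volume) :=
    (integrable_callRemainder_mul_prod hq hvar).smul_bdd C
      (hf.comp continuous_snd).aestronglyMeasurable (ae_of_all _ fun p => hfC p.2)
  calc ∫ K, (∫ s, callRemainder s₀ s K * q s ∂μ) • f K
      = ∫ K, ∫ s, (callRemainder s₀ s K * q s) • f K ∂μ := by simp_rw [integral_smul_const]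
    _ = ∫ s, (∫ K, (callRemainder s₀ s K * q s) • f K) ∂μ := (integral_integral_swap hF).symm
    _ = ∫ s, q s • (∫ K, callRemainder s₀ s K • f K) ∂μ := by
      simp_rw [mul_comm _ (q _), mul_smul, integral_smul]

lemma integral_smul_cexp_sub_taylor (hq : Integrable q μ) (hsq : Integrable (fun s => s * q s) μ)
    (hprob : ∫ s, q s ∂μ = 1) (hmean : ∫ s, s * q s ∂μ = s₀) (v : ℝ) :
    ∫ s, q s • (Complex.exp (Complex.I * v * s) -
        Complex.exp (Complex.I * v * s₀) * (1 + Complex.I * v * (s - s₀))) ∂μ =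
      Complex.exp (Complex.I * v * s₀) *
        ((∫ s, Complex.exp (Complex.I * v * (s - s₀)) * q s ∂μ) - 1) := by
  have hexp : Integrable (fun s : ℝ => Complex.exp (Complex.I * v * s) * q s) μ :=
    hq.ofReal.bdd_mul (c := 1) (by fun_prop : Continuous _).aestronglyMeasurable
      (ae_of_all _ fun s => (norm_cexp_I_mul_ofReal_mul v s).le)
  have hqC : Integrable (fun s => (q s : ℂ)) μ := hq.ofReal
  have hcentered : Integrable (fun s => (((s - s₀) * q s : ℝ) : ℂ)) μ := by
    simp_rw [sub_mul]
    exact (hsq.sub (hq.const_mul s₀)).ofReal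
  have hsplit : ∀ s : ℝ, q s • (Complex.exp (Complex.I * v * s) -
        Complex.exp (Complex.I * v * s₀) * (1 + Complex.I * v * (s - s₀))) =
      Complex.exp (Complex.I * v * s) * q s - Complex.exp (Complex.I * v * s₀) *
        ((q s : ℂ) + Complex.I * v * (((s - s₀) * q s : ℝ) : ℂ)) := by
    intro s
    rw [Complex.real_smul]
    push_cast
    ring
  have hshift : ∫ s, Complex.exp (Complex.I * v * s) * q s ∂μ =
      Complex.exp (Complex.I * v * s₀) * ∫ s, Complex.exp (Complex.I * v * (s - s₀)) * q s ∂μ := by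
    rw [← integral_const_mul]
    congr 1 with s
    rw [← mul_assoc, ← Complex.exp_add]
    ring_nf
  have hlin : Integrable (fun s : ℝ => (q s : ℂ) + Complex.I * v * (((s - s₀) * q s : ℝ) : ℂ)) μ :=
    hqC.add (hcentered.const_mul _)
  simp_rw [hsplit]
  rw [integral_sub hexp (hlin.const_mul _), integral_const_mul,
    integral_add hqC (hcentered.const_mul _), integral_const_mul, integral_complex_ofReal,
    integral_complex_ofReal, hprob, integral_sub_mul_eq_zero hq hsq hprob hmean, hshift]
  push_cast
  ring

end

theorem fourier_transform_modified_time_value_general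
    (q : ℝ → ℝ)
    (hq_prob : ∫ s, q s = 1)
    (hq_mean : Integrable (fun s => s * q s))
    (s₀ : ℝ) (hs₀ : s₀ = ∫ s, s * q s)
    (hvar : Integrable (fun s => (s - s₀) ^ 2 * q s))
    (z : ℝ → ℝ)
    (hz : ∀ K, z K = (∫ s, max (s - K) 0 * q s) - max (s₀ - K) 0)
    (Ψ : ℝ → ℂ)
    (hΨ : ∀ v : ℝ, Ψ v = ∫ s : ℝ, Complex.exp (Complex.I * (v : ℂ) * ((s : ℂ) - (s₀ : ℂ))) * ((q s : ℝ) : ℂ))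
    (v : ℝ) (hv : v ≠ 0) :
    ∫ K : ℝ, Complex.exp (Complex.I * (v : ℂ) * (K : ℂ)) * ((z K : ℝ) : ℂ) =
      Complex.exp (Complex.I * (v : ℂ) * (s₀ : ℂ)) * (1 - Ψ v) / (v : ℂ) ^ 2 := by
  have hq : Integrable q := Integrable.of_integral_ne_zero (by rw [hq_prob]; exact one_ne_zero)
  have hc : Complex.I * v ≠ 0 := by simp [hv]
  have hz_remainder : ∀ K, z K = ∫ s, callRemainder s₀ s K * q s := fun K => by
    rw [hz, integral_callRemainder_mul hq hq_mean hq_prob hs₀.symm]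
  calc ∫ K : ℝ, Complex.exp (Complex.I * v * K) * (z K : ℂ)
      = ∫ K : ℝ, (∫ s, callRemainder s₀ s K * q s) • Complex.exp (Complex.I * v * K) := by
        simp_rw [hz_remainder, Complex.real_smul, mul_comm]
    _ = ∫ s, q s • ((Complex.exp (Complex.I * v * s) - Complex.exp (Complex.I * v * s₀) *
          (1 + Complex.I * v * (s - s₀))) / (Complex.I * v) ^ 2) := by
        rw [integral_integral_callRemainder_smul_comm hq.aestronglyMeasurable hvar (by fun_prop)
          (fun K => (norm_cexp_I_mul_ofReal_mul v K).le)]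
        congr 1 with s
        rw [integral_callRemainder_smul_cexp hc]
    _ = Complex.exp (Complex.I * v * s₀) * (1 - Ψ v) / (v : ℂ) ^ 2 := by
        simp_rw [← smul_div_assoc]
        rw [integral_div, integral_smul_cexp_sub_taylor hq hq_mean hq_prob hs₀.symm, ← hΨ, mul_pow,
          Complex.I_sq]
        ring

theorem fourier_transform_modified_time_value
    (q : ℝ → ℝ) (hq_meas : Measurable q) (hq_nonneg : ∀ s, 0 ≤ q s)
    (hq_prob : ∫ s, q s = 1)
    (hq_mean : Integrable (fun s => s * q s))
    (s₀ : ℝ) (hs₀ : s₀ = ∫ s, s * q s)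
    (hvar : Integrable (fun s => (s - s₀) ^ 2 * q s))
    (z : ℝ → ℝ)
    (hz : ∀ K, z K = (∫ s, max (s - K) 0 * q s) - max (s₀ - K) 0)
    (Ψ : ℝ → ℂ)
    (hΨ : ∀ v : ℝ, Ψ v = ∫ s : ℝ, Complex.exp (Complex.I * (v : ℂ) * ((s : ℂ) - (s₀ : ℂ))) * ((q s : ℝ) : ℂ))
    (v : ℝ) (hv : v ≠ 0) :
    ∫ K : ℝ, Complex.exp (Complex.I * (v : ℂ) * (K : ℂ)) * ((z K : ℝ) : ℂ) =
      Complex.exp (Complex.I * (v : ℂ) * (s₀ : ℂ)) * (1 - Ψ v) / (v : ℂ) ^ 2 :=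
  fourier_transform_modified_time_value_general q hq_prob hq_mean s₀ hs₀ hvar z hz Ψ hΨ v hv
end

section
/- Let α > 0 and β ∈ ℝ with |β| < α, let μ > 0, G > 0, v > 0 be real numbers, and let t < T be real numbers. Define c(v,u) := v·G·e^{μu} − iβ and η(w) := (1/μ)·[ √(α² + w²) − iβ·arcsinh(w/α) − √(α² − β²)·log( 2α²·(α² − iβw + √(α² − β²)·√(α² + w²)) / ((w + iβ)·(α² − β²)^{3/2}) ) ], where √ and log denote the principal complex square root and logarithm and arcsinh(z) := log(z + √(1 + z²)). Then ∫_t^T √( α² − (β + i·v·G·e^{μu})² ) du = η(c(v,T)) − η(c(v,t)). -/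
/-!
Substituting `W = v G e^{μu} - iβ` turns the integrand into `√(α² + W²)`, and `dW/du = μ (W + iβ)`.
By the fundamental theorem of calculus it therefore suffices that
`η'(W) = √(α² + W²) / (μ (W + iβ))` on the half-line `Re W > 0, Im W = -β`. There every principal
root and logarithm in `η` is evaluated at a point of positive real part, so the derivative rules
apply term by term, and the three terms combine to the claimed value by an algebraic identity that
only uses `√(α² + W²)² = α² + W²` and `√(α² - β²)² = α² - β²`.
-/

open Complex

lemma sq_sub_sq_pos_of_abs_lt {α β : ℝ} (h : |β| < α) : 0 < α ^ 2 - β ^ 2 :=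
  sub_pos.2 (sq_lt_sq.2 (h.trans_le (le_abs_self α)))

namespace Complex

lemma cpow_half_sq (z : ℂ) : (z ^ (1 / 2 : ℂ)) ^ 2 = z := by
  rw [one_div, cpow_ofNat_inv_pow]

lemma cpow_half_re_pos {z : ℂ} (hz : z ∈ slitPlane) : 0 < (z ^ (1 / 2 : ℂ)).re := by
  rw [one_div, cpow_inv_two_re]
  refine Real.sqrt_pos.2 (half_pos ?_)
  rcases mem_slitPlane_iff.1 hz with hre | him
  · linarith [norm_nonneg z]
  · linarith [neg_abs_le z.re, abs_re_lt_norm.2 him]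

lemma cpow_half_eq_of_sq_eq {a z : ℂ} (h : a ^ 2 = z) (ha : 0 < a.re) : z ^ (1 / 2 : ℂ) = a := by
  have harg := abs_lt.1 (abs_arg_lt_pi_div_two_iff.2 (Or.inl ha))
  rw [← h, one_div]
  exact pow_cpow_ofNat_inv harg.1 harg.2.le

lemma cpow_half_ofReal_sq_sub_sq {α β : ℝ} (hβ : |β| < α) :
    ((α : ℂ) ^ 2 - (β : ℂ) ^ 2) ^ (1 / 2 : ℂ) = (√(α ^ 2 - β ^ 2) : ℝ) := by
  have hpos := sq_sub_sq_pos_of_abs_lt hβ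
  refine cpow_half_eq_of_sq_eq ?_ (by simpa using Real.sqrt_pos.2 hpos)
  rw [← ofReal_pow, Real.sq_sqrt hpos.le]
  push_cast; ring

lemma _root_.HasDerivAt.cpow_half {f : ℂ → ℂ} {f' x : ℂ} (hf : HasDerivAt f f' x)
    (hx : f x ∈ slitPlane) :
    HasDerivAt (fun y => f y ^ (1 / 2 : ℂ)) (f' / (2 * f x ^ (1 / 2 : ℂ))) x := by
  convert hf.cpow_const hx using 1
  rw [show (1 / 2 : ℂ) - 1 = -(1 / 2) by norm_num, cpow_neg]
  field_simp

lemma hasDerivAt_log_add_sqrt_one_add_sq {z : ℂ} (h₁ : 1 + z ^ 2 ∈ slitPlane)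
    (h₂ : z + (1 + z ^ 2) ^ (1 / 2 : ℂ) ∈ slitPlane) :
    HasDerivAt (fun w => log (w + (1 + w ^ 2) ^ (1 / 2 : ℂ))) (1 / (1 + z ^ 2) ^ (1 / 2 : ℂ)) z := by
  have hsqrt := ((hasDerivAt_pow 2 z).const_add 1).cpow_half h₁
  refine (((hasDerivAt_id z).add hsqrt).clog h₂).congr_deriv ?_
  have hs := ne_zero_of_re_pos (cpow_half_re_pos h₁)
  have hsum := slitPlane_ne_zero h₂
  simp only [Pi.add_apply, id]
  field_simp
  ring

lemma _root_.HasDerivAt.clog_div {f g : ℂ → ℂ} {f' g' x : ℂ} (hf : HasDerivAt f f' x)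
    (hg : HasDerivAt g g' x) (hgx : g x ≠ 0) (hx : f x / g x ∈ slitPlane) :
    HasDerivAt (fun y => log (f y / g y)) (f' / f x - g' / g x) x := by
  have hfx : f x ≠ 0 := by
    intro h0; rw [h0, zero_div] at hx; exact zero_notMem_slitPlane hx
  refine ((hf.div hg hgx).clog hx).congr_deriv ?_
  simp only [Pi.div_apply]
  field_simp

lemma cpow_half_div_ofReal_sq_add {α : ℝ} (hα : 0 < α) {z : ℂ} (hz : 0 < ((α : ℂ) ^ 2 + z ^ 2).re) :
    (1 + (z / α) ^ 2) ^ (1 / 2 : ℂ) = ((α : ℂ) ^ 2 + z ^ 2) ^ (1 / 2 : ℂ) / α := by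
  have hα' : (α : ℂ) ≠ 0 := ofReal_ne_zero.2 hα.ne'
  refine cpow_half_eq_of_sq_eq ?_ ?_
  · rw [div_pow, cpow_half_sq]
    field_simp
  · rw [div_ofReal_re]
    exact div_pos (cpow_half_re_pos (mem_slitPlane_iff.2 (Or.inl hz))) hα

lemma hasDerivAt_log_div_add_sqrt_one_add_div_sq {α : ℝ} (hα : 0 < α) {z : ℂ}
    (hz : 0 < ((α : ℂ) ^ 2 + z ^ 2).re) (hz' : 0 < z.re) :
    HasDerivAt (fun w => log (w / α + (1 + (w / α) ^ 2) ^ (1 / 2 : ℂ)))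
      (1 / ((α : ℂ) ^ 2 + z ^ 2) ^ (1 / 2 : ℂ)) z := by
  have hα' : (α : ℂ) ≠ 0 := ofReal_ne_zero.2 hα.ne'
  have hsq : 1 + (z / α) ^ 2 = ((α : ℂ) ^ 2 + z ^ 2) / (α ^ 2 : ℝ) := by
    push_cast; field_simp
  have h₁ : 1 + (z / α) ^ 2 ∈ slitPlane := by
    refine mem_slitPlane_iff.2 (Or.inl ?_)
    rw [hsq, div_ofReal_re]
    positivity
  have h₂ : z / α + (1 + (z / α) ^ 2) ^ (1 / 2 : ℂ) ∈ slitPlane := by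
    refine mem_slitPlane_iff.2 (Or.inl ?_)
    rw [cpow_half_div_ofReal_sq_add hα hz, ← add_div, div_ofReal_re, add_re]
    exact div_pos (add_pos hz' (cpow_half_re_pos (mem_slitPlane_iff.2 (Or.inl hz)))) hα
  refine ((hasDerivAt_log_add_sqrt_one_add_sq h₁ h₂).comp z
    ((hasDerivAt_id z).div_const (α : ℂ))).congr_deriv ?_
  rw [cpow_half_div_ofReal_sq_add hα hz]
  field_simp

end Complex

/-- The bracket of the paper's `η`: `η w = (1 / μ) * nigPrimitive α β w`. -/
noncomputable def nigPrimitive (α β : ℝ) (w : ℂ) : ℂ :=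
  ((α : ℂ) ^ 2 + w ^ 2) ^ (1 / 2 : ℂ)
    - I * (β : ℂ) * log (w / (α : ℂ) + (1 + (w / (α : ℂ)) ^ 2) ^ (1 / 2 : ℂ))
    - ((α : ℂ) ^ 2 - (β : ℂ) ^ 2) ^ (1 / 2 : ℂ) *
        log (2 * (α : ℂ) ^ 2 *
          ((α : ℂ) ^ 2 - I * (β : ℂ) * w
            + ((α : ℂ) ^ 2 - (β : ℂ) ^ 2) ^ (1 / 2 : ℂ) * ((α : ℂ) ^ 2 + w ^ 2) ^ (1 / 2 : ℂ)) /
          ((w + I * (β : ℂ)) * ((((α ^ 2 - β ^ 2) ^ ((3 : ℝ) / 2) : ℝ)) : ℂ)))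

/-- The three terms of `(nigPrimitive α β)' W`, with `a = α`, `c = iβ`, `S = √(a² + W²)` and
`k = √(a² + c²)`, add up to `S / (W + c)`. -/
lemma nigPrimitive_deriv_identity {a c k S W : ℂ} (hS : S ^ 2 = a ^ 2 + W ^ 2)
    (hk : k ^ 2 = a ^ 2 + c ^ 2) (hS₀ : S ≠ 0) (hN₀ : a ^ 2 - c * W + k * S ≠ 0)
    (hD₀ : W + c ≠ 0) :
    W / S - c * (1 / S) - k * ((-c + k * (W / S)) / (a ^ 2 - c * W + k * S) - 1 / (W + c))
      = S / (W + c) := by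
  have hN₀' : a ^ 2 - W * c + S * k ≠ 0 := by convert hN₀ using 1; ring
  field_simp
  linear_combination (c ^ 2 + W * c - S * k) * hS + (S ^ 2 - W ^ 2 - W * c) * hk

lemma re_sq_add_sub_mul_I_sq_pos {α β x : ℝ} (hβ : |β| < α) :
    0 < ((α : ℂ) ^ 2 + ((x : ℂ) - I * β) ^ 2).re := by
  have hre : ((α : ℂ) ^ 2 + ((x : ℂ) - I * β) ^ 2).re = α ^ 2 - β ^ 2 + x ^ 2 := by
    simp [sq]; ring
  rw [hre]
  nlinarith [sq_sub_sq_pos_of_abs_lt hβ, sq_nonneg x]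

lemma re_nigPrimitive_log_arg_pos {α β x : ℝ} (hα : 0 < α) (hβ : |β| < α) (hx : 0 < x) :
    0 < (2 * (α : ℂ) ^ 2 *
      ((α : ℂ) ^ 2 - I * β * ((x : ℂ) - I * β) + ((α : ℂ) ^ 2 - (β : ℂ) ^ 2) ^ (1 / 2 : ℂ) *
        ((α : ℂ) ^ 2 + ((x : ℂ) - I * β) ^ 2) ^ (1 / 2 : ℂ)) /
      (((x : ℂ) - I * β + I * β) * (((α ^ 2 - β ^ 2) ^ ((3 : ℝ) / 2) : ℝ) : ℂ))).re := by
  have hαβ := sq_sub_sq_pos_of_abs_lt hβ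
  have hS := cpow_half_re_pos (mem_slitPlane_iff.2 (Or.inl (re_sq_add_sub_mul_I_sq_pos
    (x := x) hβ)))
  rw [sub_add_cancel, cpow_half_ofReal_sq_sub_sq hβ, ← ofReal_mul, div_ofReal_re,
    show (2 : ℂ) * α ^ 2 = (2 * α ^ 2 : ℝ) by push_cast; ring, mul_assoc, re_ofReal_mul]
  refine div_pos (mul_pos (by positivity) ?_) (by positivity)
  generalize ((α : ℂ) ^ 2 + ((x : ℂ) - I * β) ^ 2) ^ (1 / 2 : ℂ) = S at hS ⊢
  simp [sq]
  nlinarith [mul_nonneg (Real.sqrt_nonneg (α * α - β * β)) hS.le]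

lemma hasDerivAt_nigPrimitive {α β x : ℝ} (hα : 0 < α) (hβ : |β| < α) (hx : 0 < x) :
    HasDerivAt (nigPrimitive α β)
      (((α : ℂ) ^ 2 + ((x : ℂ) - I * β) ^ 2) ^ (1 / 2 : ℂ) / x) ((x : ℂ) - I * β) := by
  set W : ℂ := (x : ℂ) - I * β with hW
  set S := ((α : ℂ) ^ 2 + W ^ 2) ^ (1 / 2 : ℂ) with hS
  set k := ((α : ℂ) ^ 2 - (β : ℂ) ^ 2) ^ (1 / 2 : ℂ) with hk
  set K : ℂ := (((α ^ 2 - β ^ 2) ^ ((3 : ℝ) / 2) : ℝ) : ℂ)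
  have hA : (α : ℂ) ^ 2 + W ^ 2 ∈ slitPlane :=
    mem_slitPlane_iff.2 (Or.inl (re_sq_add_sub_mul_I_sq_pos hβ))
  have hWc : W + I * β = x := by rw [hW]; ring
  have hK₀ : K ≠ 0 := ofReal_ne_zero.2 (Real.rpow_pos_of_pos (sq_sub_sq_pos_of_abs_lt hβ) _).ne'
  have hQ := re_nigPrimitive_log_arg_pos hα hβ hx
  have hN₀ : (α : ℂ) ^ 2 - I * β * W + k * S ≠ 0 := by
    rintro h
    rw [← hW, ← hS, ← hk, h, mul_zero, zero_div, zero_re] at hQ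
    exact hQ.false
  have hSqrt : HasDerivAt (fun w => ((α : ℂ) ^ 2 + w ^ 2) ^ (1 / 2 : ℂ)) (W / S) W := by
    refine (((hasDerivAt_pow 2 W).const_add _).cpow_half hA).congr_deriv ?_
    rw [← hS]; push_cast; ring
  have hArsinh := hasDerivAt_log_div_add_sqrt_one_add_div_sq hα
    (re_sq_add_sub_mul_I_sq_pos hβ) (by simpa [hW] using hx)
  have hLog := ((((hasDerivAt_id W).const_mul (I * β)).const_sub ((α : ℂ) ^ 2)).add
      (hSqrt.const_mul k) |>.const_mul (2 * (α : ℂ) ^ 2)).clog_div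
    (((hasDerivAt_id W).add_const (I * β)).mul_const K)
    (mul_ne_zero (by rw [id_eq, hWc]; exact ofReal_ne_zero.2 hx.ne') hK₀)
    (mem_slitPlane_iff.2 (Or.inl hQ))
  refine ((hSqrt.sub (hArsinh.const_mul _)).sub (hLog.const_mul k)).congr_deriv ?_
  simp only [Pi.add_apply, id_eq, mul_one, one_mul]
  rw [← hS, mul_div_mul_left _ _ (by simp [hα.ne']), div_mul_cancel_right₀ hK₀, ← one_div, ← hWc]
  refine nigPrimitive_deriv_identity (cpow_half_sq _) ?_
    (ne_zero_of_re_pos (cpow_half_re_pos hA)) hN₀ ?_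
  · rw [hk, cpow_half_sq]; linear_combination -(β : ℂ) ^ 2 * I_sq
  · rw [hWc]; exact ofReal_ne_zero.2 hx.ne'

lemma hasDerivAt_nigPrimitive_comp_exp {α β μ C : ℝ} (hα : 0 < α) (hβ : |β| < α) (hμ : μ ≠ 0)
    (hC : 0 < C) (u : ℝ) :
    HasDerivAt (fun u => 1 / (μ : ℂ) * nigPrimitive α β ((C * Real.exp (μ * u) : ℝ) - I * β))
      (((α : ℂ) ^ 2 + (((C * Real.exp (μ * u) : ℝ) : ℂ) - I * β) ^ 2) ^ (1 / 2 : ℂ)) u := by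
  have hx : 0 < C * Real.exp (μ * u) := by positivity
  have hexp : HasDerivAt (fun u => C * Real.exp (μ * u)) (μ * (C * Real.exp (μ * u))) u :=
    (((hasDerivAt_id' u).const_mul μ).exp.const_mul C).congr_deriv (by ring)
  refine (((hasDerivAt_nigPrimitive hα hβ hx).comp u
    (hexp.ofReal_comp.sub_const _)).const_mul _).congr_deriv ?_
  have hx' := ofReal_ne_zero.2 hx.ne'
  have hμ' := ofReal_ne_zero.2 hμ
  rw [ofReal_mul μ]
  field_simp

theorem nig_samuelson_time_integral_general
    (α β μ G v t T : ℝ) (hα : 0 < α) (hβ : |β| < α) (hμ : 0 < μ)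
    (hG : 0 < G) (hv : 0 < v)
    (c : ℝ → ℝ → ℂ)
    (hc : ∀ w u : ℝ, c w u = ((w * G * Real.exp (μ * u) : ℝ) : ℂ) - Complex.I * (β : ℂ))
    (η : ℂ → ℂ)
    (hη : ∀ w : ℂ, η w = (1 / (μ : ℂ)) *
      (((α : ℂ) ^ 2 + w ^ 2) ^ (1 / 2 : ℂ)
        - Complex.I * (β : ℂ) *
            Complex.log (w / (α : ℂ) + (1 + (w / (α : ℂ)) ^ 2) ^ (1 / 2 : ℂ))
        - ((α : ℂ) ^ 2 - (β : ℂ) ^ 2) ^ (1 / 2 : ℂ) *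
            Complex.log (2 * (α : ℂ) ^ 2 *
              ((α : ℂ) ^ 2 - Complex.I * (β : ℂ) * w
                + ((α : ℂ) ^ 2 - (β : ℂ) ^ 2) ^ (1 / 2 : ℂ) *
                  ((α : ℂ) ^ 2 + w ^ 2) ^ (1 / 2 : ℂ)) /
              ((w + Complex.I * (β : ℂ)) *
                ((((α ^ 2 - β ^ 2) ^ ((3 : ℝ) / 2) : ℝ)) : ℂ))))) :
    ∫ u in t..T,
        ((α : ℂ) ^ 2 - ((β : ℂ) + Complex.I * (v : ℂ) * (G : ℂ) * (Real.exp (μ * u) : ℂ)) ^ 2)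
          ^ (1 / 2 : ℂ) =
      η (c v T) - η (c v t) := by
  obtain rfl : η = fun w => 1 / (μ : ℂ) * nigPrimitive α β w := funext hη
  have hbase (u : ℝ) : (α : ℂ) ^ 2 - ((β : ℂ) + I * v * G * (Real.exp (μ * u) : ℂ)) ^ 2
      = (α : ℂ) ^ 2 + (((v * G * Real.exp (μ * u) : ℝ) : ℂ) - I * β) ^ 2 := by
    simp only [ofReal_mul]
    linear_combination -((v * G * Real.exp (μ * u) : ℂ) ^ 2 + (β : ℂ) ^ 2) * I_sq
  simp only [hc, hbase]
  refine intervalIntegral.integral_eq_sub_of_hasDerivAt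
    (fun u _ => hasDerivAt_nigPrimitive_comp_exp hα hβ hμ.ne' (mul_pos hv hG) u) ?_
  refine (Continuous.cpow (by fun_prop) continuous_const fun u => ?_).intervalIntegrable _ _
  exact mem_slitPlane_iff.2 (Or.inl (re_sq_add_sub_mul_I_sq_pos hβ))

theorem nig_samuelson_time_integral
    (α β μ G v t T : ℝ) (hα : 0 < α) (hβ : |β| < α) (hμ : 0 < μ)
    (hG : 0 < G) (hv : 0 < v) (htT : t < T)
    (c : ℝ → ℝ → ℂ)
    (hc : ∀ w u : ℝ, c w u = ((w * G * Real.exp (μ * u) : ℝ) : ℂ) - Complex.I * (β : ℂ))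
    (η : ℂ → ℂ)
    (hη : ∀ w : ℂ, η w = (1 / (μ : ℂ)) *
      (((α : ℂ) ^ 2 + w ^ 2) ^ (1 / 2 : ℂ)
        - Complex.I * (β : ℂ) *
            Complex.log (w / (α : ℂ) + (1 + (w / (α : ℂ)) ^ 2) ^ (1 / 2 : ℂ))
        - ((α : ℂ) ^ 2 - (β : ℂ) ^ 2) ^ (1 / 2 : ℂ) *
            Complex.log (2 * (α : ℂ) ^ 2 *
              ((α : ℂ) ^ 2 - Complex.I * (β : ℂ) * w
                + ((α : ℂ) ^ 2 - (β : ℂ) ^ 2) ^ (1 / 2 : ℂ) *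
                  ((α : ℂ) ^ 2 + w ^ 2) ^ (1 / 2 : ℂ)) /
              ((w + Complex.I * (β : ℂ)) *
                ((((α ^ 2 - β ^ 2) ^ ((3 : ℝ) / 2) : ℝ)) : ℂ))))) :
    ∫ u in t..T,
        ((α : ℂ) ^ 2 - ((β : ℂ) + Complex.I * (v : ℂ) * (G : ℂ) * (Real.exp (μ * u) : ℂ)) ^ 2)
          ^ (1 / 2 : ℂ) =
      η (c v T) - η (c v t) :=
  nig_samuelson_time_integral_general α β μ G v t T hα hβ hμ hG hv c hc η hη
end

section
/- Let q : ℝ → ℝ be a measurable function with q ≥ 0 and ∫_ℝ q(s) ds = 1, such that s ↦ s·q(s) is integrable, with mean s₀ := ∫_ℝ s·q(s) ds, and assume ∫_ℝ (s − s₀)²·q(s) ds < ∞. Define Ψ(v) := ∫_ℝ e^{iv(s−s₀)}·q(s) ds and assume that v ↦ (1 − Ψ(v))/v² is integrable on ℝ. Then for every K ∈ ℝ, ∫_ℝ max(s − K, 0)·q(s) ds = max(s₀ − K, 0) + (1/π) · ∫_0^∞ Re( e^{−iv(K − s₀)}·(1 − Ψ(v))/v² ) dv. -/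
/-!
Writing max (x, 0) = (x + |x|) / 2 and |x| = (2 / π) ∫₀^∞ (1 - cos (x v)) / v² dv, the call
price is half the forward value s₀ - K plus (1 / π) ∫₀^∞ E[1 - cos ((S - K) v)] / v² dv, where
the expectation and the v-integral may be exchanged because the integrand is nonnegative. Since
E[cos ((S - K) v)] = Re (e^{-iv(K - s₀)} Ψ(v)), this integrand is the Fourier integrand of the
formula up to the term (1 - cos ((K - s₀) v)) / v², whose integral π |K - s₀| / 2 converts the
remaining |s₀ - K| into max (s₀ - K, 0).

The constant ∫₀^∞ (1 - cos v) / v² dv = π / 2 comes from 1 / v² = ∫₀^∞ t e^{-tv} dt: exchanging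
the integrals leaves the Laplace transform of 1 - cos, and then ∫₀^∞ dt / (1 + t²).
-/

open MeasureTheory Set Real
open scoped Complex
open Complex (I)

lemma integral_Ioi_one_sub_cos_mul_exp_neg_mul {t : ℝ} (ht : 0 < t) :
    ∫ v in Ioi 0, (1 - cos v) * exp (-(t * v)) = 1 / (t * (1 + t ^ 2)) := by
  set a : ℂ := -t
  set b : ℂ := -t + I
  have ha : a.re < 0 := by simpa [a] using ht
  have hb : b.re < 0 := by simpa [b] using ht
  have h_re (v : ℝ) : (1 - cos v) * exp (-(t * v)) = (cexp (a * v) - cexp (b * v)).re := by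
    simp [a, b, Complex.exp_re]
    ring
  calc ∫ v in Ioi 0, (1 - cos v) * exp (-(t * v))
      = (∫ v in Ioi (0 : ℝ), cexp (a * v) - cexp (b * v)).re := by
        simp_rw [h_re]
        exact integral_re ((integrableOn_exp_mul_complex_Ioi ha 0).sub
          (integrableOn_exp_mul_complex_Ioi hb 0))
    _ = (-1 / a + 1 / b).re := by
        rw [integral_sub (integrableOn_exp_mul_complex_Ioi ha 0)
          (integrableOn_exp_mul_complex_Ioi hb 0), integral_exp_mul_complex_Ioi ha,
          integral_exp_mul_complex_Ioi hb]
        simp only [Complex.ofReal_zero, mul_zero, Complex.exp_zero, neg_div, sub_neg_eq_add]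
    _ = 1 / (t * (1 + t ^ 2)) := by
        simp [a, b, Complex.normSq_apply]
        field_simp
        ring

lemma integral_Ioi_mul_exp_neg_mul {v : ℝ} (hv : 0 < v) :
    ∫ t in Ioi 0, t * exp (-(t * v)) = 1 / v ^ 2 := by
  have h := integral_rpow_mul_exp_neg_mul_Ioi two_pos hv
  norm_num [Real.Gamma_two] at h
  simpa [mul_comm _ v] using h

lemma integrable_prod_of_nonneg {α β : Type*} [MeasurableSpace α] [MeasurableSpace β]
    {μ : Measure α} {ν : Measure β} [SFinite μ] [SFinite ν] {F : α → β → ℝ}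
    (hF : AEStronglyMeasurable (Function.uncurry F) (μ.prod ν))
    (hF_nonneg : ∀ᵐ b ∂ν, ∀ᵐ a ∂μ, 0 ≤ F a b)
    (h_fiber : ∀ᵐ b ∂ν, Integrable (F · b) μ)
    (h_int : Integrable (fun b => ∫ a, F a b ∂μ) ν) :
    Integrable (Function.uncurry F) (μ.prod ν) := by
  refine (integrable_prod_iff' hF).2 ⟨h_fiber, h_int.congr ?_⟩
  filter_upwards [hF_nonneg] with b hb
  exact integral_congr_ae (hb.mono fun a ha => (Real.norm_of_nonneg ha).symm)

lemma integral_Ioi_one_sub_cos_div_sq : ∫ v in Ioi 0, (1 - cos v) / v ^ 2 = π / 2 := by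
  set F : ℝ → ℝ → ℝ := fun v t => (1 - cos v) * (t * exp (-(t * v)))
  have h_fiber {t : ℝ} (ht : 0 < t) : ∫ v in Ioi 0, F v t = 1 / (1 + t ^ 2) := by
    simp_rw [F, mul_left_comm _ t, integral_const_mul,
      integral_Ioi_one_sub_cos_mul_exp_neg_mul ht]
    field_simp
  have hF : Integrable (Function.uncurry F)
      ((volume.restrict (Ioi 0)).prod (volume.restrict (Ioi 0))) := by
    refine integrable_prod_of_nonneg (by fun_prop) ?_ ?_ ?_
    · filter_upwards [ae_restrict_mem measurableSet_Ioi] with t ht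
      refine ae_of_all _ fun v => mul_nonneg (sub_nonneg.2 (cos_le_one v)) ?_
      exact mul_nonneg (le_of_lt ht) (exp_pos _).le
    · filter_upwards [ae_restrict_mem measurableSet_Ioi] with t ht
      exact .of_integral_ne_zero (by rw [h_fiber ht]; positivity)
    · refine (integrable_inv_one_add_sq.restrict (s := Ioi 0)).congr ?_
      filter_upwards [ae_restrict_mem measurableSet_Ioi] with t ht
      rw [h_fiber ht, one_div]
  calc ∫ v in Ioi 0, (1 - cos v) / v ^ 2
      = ∫ v in Ioi 0, ∫ t in Ioi 0, F v t :=
        setIntegral_congr_fun measurableSet_Ioi fun v hv => by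
        rw [integral_const_mul, integral_Ioi_mul_exp_neg_mul hv, mul_one_div]
    _ = ∫ t in Ioi 0, ∫ v in Ioi 0, F v t := integral_integral_swap hF
    _ = ∫ t in Ioi 0, 1 / (1 + t ^ 2) :=
        setIntegral_congr_fun measurableSet_Ioi fun t ht => h_fiber ht
    _ = π / 2 := by simp [integral_Ioi_inv_one_add_sq]

lemma integral_Ioi_one_sub_cos_mul_div_sq (a : ℝ) :
    ∫ v in Ioi 0, (1 - cos (a * v)) / v ^ 2 = π * |a| / 2 := by
  rcases eq_or_ne a 0 with rfl | ha
  · simp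
  have ha' : 0 < |a| := abs_pos.2 ha
  have h_scale : ∀ v ∈ Ioi (0 : ℝ),
      (1 - cos (a * v)) / v ^ 2 = a ^ 2 * ((1 - cos (|a| * v)) / (|a| * v) ^ 2) := by
    intro v hv
    rw [← cos_abs (a * v), abs_mul, abs_of_pos (mem_Ioi.1 hv), mul_pow, sq_abs]
    field_simp [ne_of_gt (mem_Ioi.1 hv)]
  rw [setIntegral_congr_fun measurableSet_Ioi h_scale, integral_const_mul,
    integral_comp_mul_left_Ioi (fun x => (1 - cos x) / x ^ 2) 0 ha', mul_zero,
    integral_Ioi_one_sub_cos_div_sq, smul_eq_mul, ← sq_abs]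
  field_simp

lemma integrableOn_one_sub_cos_mul_div_sq (a : ℝ) :
    IntegrableOn (fun v => (1 - cos (a * v)) / v ^ 2) (Ioi 0) := by
  rcases eq_or_ne a 0 with rfl | ha
  · simp
  -- a function with nonzero Bochner integral is integrable
  exact .of_integral_ne_zero <| by
    rw [integral_Ioi_one_sub_cos_mul_div_sq]
    have := abs_pos.2 ha
    positivity

section Weighted

variable {α : Type*} [MeasurableSpace α] {μ : Measure α} [SFinite μ] {f w : α → ℝ}

lemma integrable_prod_one_sub_cos_mul_div_sq_mul (hf : Measurable f) (hw : Measurable w)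
    (hw_nonneg : ∀ a, 0 ≤ w a) (hfw : Integrable (fun a => |f a| * w a) μ) :
    Integrable (Function.uncurry fun v a => (1 - cos (f a * v)) / v ^ 2 * w a)
      ((volume.restrict (Ioi 0)).prod μ) := by
  refine integrable_prod_of_nonneg (by fun_prop) (ae_of_all _ fun a => ae_of_all _ fun v => ?_)
    (ae_of_all _ fun a => (integrableOn_one_sub_cos_mul_div_sq (f a)).mul_const (w a))
    ((hfw.const_mul (π / 2)).congr (ae_of_all _ fun a => ?_))
  · exact mul_nonneg (div_nonneg (sub_nonneg.2 (cos_le_one _)) (sq_nonneg v)) (hw_nonneg a)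
  · simp only
    rw [integral_mul_const, integral_Ioi_one_sub_cos_mul_div_sq]
    ring

lemma integrableOn_integral_one_sub_cos_mul_div_sq_mul (hf : Measurable f) (hw : Measurable w)
    (hw_nonneg : ∀ a, 0 ≤ w a) (hfw : Integrable (fun a => |f a| * w a) μ) :
    IntegrableOn (fun v => ∫ a, (1 - cos (f a * v)) / v ^ 2 * w a ∂μ) (Ioi 0) :=
  (integrable_prod_one_sub_cos_mul_div_sq_mul hf hw hw_nonneg hfw).integral_prod_left

lemma integral_Ioi_integral_one_sub_cos_mul_div_sq_mul (hf : Measurable f) (hw : Measurable w)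
    (hw_nonneg : ∀ a, 0 ≤ w a) (hfw : Integrable (fun a => |f a| * w a) μ) :
    ∫ v in Ioi 0, ∫ a, (1 - cos (f a * v)) / v ^ 2 * w a ∂μ =
      π / 2 * ∫ a, |f a| * w a ∂μ := by
  rw [integral_integral_swap (integrable_prod_one_sub_cos_mul_div_sq_mul hf hw hw_nonneg hfw),
    ← integral_const_mul]
  congr 1 with a
  rw [integral_mul_const, integral_Ioi_one_sub_cos_mul_div_sq]
  ring

end Weighted

lemma re_exp_mul_one_sub_integral_exp_mul {μ : Measure ℝ} {q : ℝ → ℝ}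
    (hq : Integrable q μ) (hq_one : ∫ s, q s ∂μ = 1) (a b v : ℝ) :
    (cexp (-I * v * (a - b)) * (1 - ∫ s, cexp (I * v * (s - b)) * (q s : ℂ) ∂μ)).re =
      ∫ s, (1 - cos ((s - a) * v)) * q s ∂μ - (1 - cos ((a - b) * v)) := by
  have h_shift : cexp (-I * v * (a - b)) * ∫ s, cexp (I * v * (s - b)) * (q s : ℂ) ∂μ =
      ∫ s, cexp (((s - a) * v : ℝ) * I) * (q s : ℂ) ∂μ := by
    rw [← integral_const_mul]
    congr 1 with s
    rw [← mul_assoc, ← Complex.exp_add]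
    push_cast
    ring_nf
  have h_exp : Integrable (fun s => cexp (((s - a) * v : ℝ) * I) * (q s : ℂ)) μ :=
    hq.ofReal.bdd_mul (c := 1) (by fun_prop) (ae_of_all _ fun s => by
      rw [Complex.norm_exp_ofReal_mul_I])
  have h_cos : Integrable (fun s => cos ((s - a) * v) * q s) μ :=
    hq.bdd_mul (c := 1) (by fun_prop) (ae_of_all _ fun s => by
      rw [Real.norm_eq_abs]; exact abs_cos_le_one _)
  have h_re := integral_re h_exp
  simp only [RCLike.re_to_complex, Complex.re_mul_ofReal, Complex.exp_ofReal_mul_I_re] at h_re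
  have h_phase : -I * v * (a - b) = ((-((a - b) * v) : ℝ) : ℂ) * I := by push_cast; ring
  rw [mul_sub, mul_one, h_shift, Complex.sub_re, ← h_re, h_phase, Complex.exp_ofReal_mul_I_re,
    cos_neg]
  simp_rw [sub_mul (1 : ℝ), one_mul]
  rw [integral_sub hq h_cos, hq_one]
  ring

lemma max_zero_eq_add_abs_div_two {𝕜 : Type*} [Field 𝕜] [LinearOrder 𝕜]
    [IsStrictOrderedRing 𝕜] (x : 𝕜) : max x 0 = (x + |x|) / 2 := by
  linarith [max_zero_add_max_neg_zero_eq_abs_self x, max_zero_sub_eq_self x]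

lemma integral_max_sub_zero_mul {μ : Measure ℝ} {q : ℝ → ℝ} {K : ℝ}
    (hq : Integrable q μ) (hq_mean : Integrable (fun s => s * q s) μ)
    (habs : Integrable (fun s => |s - K| * q s) μ) :
    ∫ s, max (s - K) 0 * q s ∂μ =
      (∫ s, s * q s ∂μ - K * ∫ s, q s ∂μ + ∫ s, |s - K| * q s ∂μ) / 2 := by
  have h_sub : Integrable (fun s => s * q s - K * q s) μ := hq_mean.sub (hq.const_mul K)
  simp_rw [max_zero_eq_add_abs_div_two, div_mul_eq_mul_div, add_mul, sub_mul]
  rw [integral_div, integral_add h_sub habs, integral_sub hq_mean (hq.const_mul K),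
    integral_const_mul]

theorem carr_madan_call_pricing_formula_general
    (q : ℝ → ℝ) (hq_meas : Measurable q) (hq_nonneg : ∀ s, 0 ≤ q s)
    (hq_prob : ∫ s, q s = 1)
    (hq_mean : Integrable (fun s => s * q s))
    (s₀ : ℝ) (hs₀ : s₀ = ∫ s, s * q s)
    (Ψ : ℝ → ℂ)
    (hΨ : ∀ v : ℝ, Ψ v = ∫ s : ℝ, Complex.exp (Complex.I * (v : ℂ) * ((s : ℂ) - (s₀ : ℂ))) * ((q s : ℝ) : ℂ))
    (K : ℝ) :
    ∫ s, max (s - K) 0 * q s =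
      max (s₀ - K) 0 + (1 / Real.pi) *
        ∫ v in Set.Ioi (0 : ℝ),
          (Complex.exp (-Complex.I * (v : ℂ) * ((K : ℂ) - (s₀ : ℂ))) * (1 - Ψ v) / (v : ℂ) ^ 2).re := by
  have hq : Integrable q := .of_integral_ne_zero (by rw [hq_prob]; exact one_ne_zero)
  have habs : Integrable (fun s => |s - K| * q s) :=
    (hq_mean.sub (hq.const_mul K)).abs.congr (ae_of_all _ fun s => by
      simp only [Pi.sub_apply, ← sub_mul, abs_mul, abs_of_nonneg (hq_nonneg s)])
  have h_integrand : ∀ v ∈ Ioi (0 : ℝ),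
      (Complex.exp (-Complex.I * (v : ℂ) * ((K : ℂ) - (s₀ : ℂ))) * (1 - Ψ v) / (v : ℂ) ^ 2).re =
        (∫ s, (1 - cos ((s - K) * v)) / v ^ 2 * q s) - (1 - cos ((K - s₀) * v)) / v ^ 2 := by
    intro v _
    rw [hΨ, ← Complex.ofReal_pow, Complex.div_ofReal_re,
      re_exp_mul_one_sub_integral_exp_mul hq hq_prob]
    simp_rw [div_mul_eq_mul_div, integral_div]
    ring
  have hK : Measurable fun s : ℝ => s - K := measurable_sub_const K
  rw [integral_max_sub_zero_mul hq hq_mean habs, ← hs₀, hq_prob,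
    setIntegral_congr_fun measurableSet_Ioi h_integrand,
    integral_sub (integrableOn_integral_one_sub_cos_mul_div_sq_mul hK hq_meas hq_nonneg habs)
      (integrableOn_one_sub_cos_mul_div_sq _), integral_Ioi_one_sub_cos_mul_div_sq,
    integral_Ioi_integral_one_sub_cos_mul_div_sq_mul hK hq_meas hq_nonneg habs,
    max_zero_eq_add_abs_div_two, abs_sub_comm K]
  field_simp
  ring

theorem carr_madan_call_pricing_formula
    (q : ℝ → ℝ) (hq_meas : Measurable q) (hq_nonneg : ∀ s, 0 ≤ q s)
    (hq_prob : ∫ s, q s = 1)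
    (hq_mean : Integrable (fun s => s * q s))
    (s₀ : ℝ) (hs₀ : s₀ = ∫ s, s * q s)
    (hvar : Integrable (fun s => (s - s₀) ^ 2 * q s))
    (Ψ : ℝ → ℂ)
    (hΨ : ∀ v : ℝ, Ψ v = ∫ s : ℝ, Complex.exp (Complex.I * (v : ℂ) * ((s : ℂ) - (s₀ : ℂ))) * ((q s : ℝ) : ℂ))
    (hΨ_int : Integrable (fun v : ℝ => (1 - Ψ v) / (v : ℂ) ^ 2))
    (K : ℝ) :
    ∫ s, max (s - K) 0 * q s =
      max (s₀ - K) 0 + (1 / Real.pi) *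
        ∫ v in Set.Ioi (0 : ℝ),
          (Complex.exp (-Complex.I * (v : ℂ) * ((K : ℂ) - (s₀ : ℂ))) * (1 - Ψ v) / (v : ℂ) ^ 2).re :=
  carr_madan_call_pricing_formula_general q hq_meas hq_nonneg hq_prob hq_mean s₀ hs₀ Ψ hΨ K
end

section
/- Let q : ℝ → ℝ be a measurable function with q ≥ 0 and ∫_ℝ q(s) ds = 1, such that s ↦ s·q(s) is integrable, with mean s₀ := ∫_ℝ s·q(s) ds, and assume ∫_ℝ (s − s₀)²·q(s) ds < ∞. Define z(K) := ∫_ℝ max(s − K, 0)·q(s) ds − max(s₀ − K, 0). Then z is integrable on ℝ and ∫_ℝ |z(K)| dK ≤ (1/2) · ∫_ℝ (s − s₀)²·q(s) ds. -/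
open MeasureTheory

private noncomputable def gg (s₀ s K : ℝ) : ℝ :=
  (s - K) * ((if K < s then 1 else 0) - (if K < s₀ then 1 else 0))

private lemma gg_mul (s₀ s K qs : ℝ) :
    gg s₀ s K * qs = max (s - K) 0 * qs - (if K < s₀ then (s - K) * qs else 0) := by
  unfold gg
  by_cases h1 : K < s
  · rw [max_eq_left (sub_nonneg.2 h1.le)]
    by_cases h2 : K < s₀ <;> simp [h1, h2] <;> ring
  · rw [max_eq_right (sub_nonpos.2 (not_lt.1 h1))]
    by_cases h2 : K < s₀ <;> simp [h1, h2] <;> ring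

private lemma tri_int1 {a b : ℝ} (h : a ≤ b) :
    ∫ K in Set.Ico a b, (b - K) = (b - a) ^ 2 / 2 := by
  rw [integral_Ico_eq_integral_Ioo, ← integral_Ioc_eq_integral_Ioo,
    ← intervalIntegral.integral_of_le h,
    intervalIntegral.integral_sub intervalIntegrable_const intervalIntegral.intervalIntegrable_id,
    intervalIntegral.integral_const, integral_id]
  simp only [smul_eq_mul]
  ring

private lemma tri_int2 {a b : ℝ} (h : a ≤ b) :
    ∫ K in Set.Ico a b, (K - a) = (b - a) ^ 2 / 2 := by
  rw [integral_Ico_eq_integral_Ioo, ← integral_Ioc_eq_integral_Ioo,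
    ← intervalIntegral.integral_of_le h,
    intervalIntegral.integral_sub intervalIntegral.intervalIntegrable_id intervalIntegrable_const,
    intervalIntegral.integral_const, integral_id]
  simp only [smul_eq_mul]
  ring

private lemma absg_eq (s₀ s K : ℝ) :
    |gg s₀ s K| = (Set.Ico (min s s₀) (max s s₀)).indicator (fun K => |s - K|) K := by
  unfold gg
  rw [abs_mul]
  rcases lt_or_ge K s with h1 | h1 <;> rcases lt_or_ge K s₀ with h2 | h2
  · simp [Set.indicator_apply, Set.mem_Ico, h1, h2, not_le.2 (lt_min h1 h2)]
  · simp [Set.indicator_apply, Set.mem_Ico, h1, not_lt.2 h2,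
      (min_le_right s s₀).trans h2, h1.trans_le (le_max_left s s₀)]
  · simp [Set.indicator_apply, Set.mem_Ico, not_lt.2 h1, h2,
      (min_le_left s s₀).trans h1, h2.trans_le (le_max_right s s₀)]
  · simp [Set.indicator_apply, Set.mem_Ico, not_lt.2 h1, not_lt.2 h2,
      not_lt.2 (max_le h1 h2)]

private lemma absg_integrable (s₀ s : ℝ) :
    Integrable (fun K => |gg s₀ s K|) := by
  have : (fun K => |gg s₀ s K|) =
      (Set.Ico (min s s₀) (max s s₀)).indicator (fun K => |s - K|) :=
    funext fun K => absg_eq s₀ s K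
  rw [this]
  refine (IntegrableOn.integrable_indicator ?_ measurableSet_Ico)
  exact ((continuous_const.sub continuous_id).abs.integrableOn_Icc).mono_set
    Set.Ico_subset_Icc_self

private lemma absg_integral (s₀ s : ℝ) :
    ∫ K, |gg s₀ s K| = (s - s₀) ^ 2 / 2 := by
  have h1 : (fun K => |gg s₀ s K|) =
      (Set.Ico (min s s₀) (max s s₀)).indicator (fun K => |s - K|) :=
    funext fun K => absg_eq s₀ s K
  rw [h1, integral_indicator measurableSet_Ico]
  rcases le_total s₀ s with h | h
  · rw [min_eq_right h, max_eq_left h]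
    rw [setIntegral_congr_fun (g := fun K => s - K) measurableSet_Ico
      (fun K hK => abs_of_nonneg (by linarith [hK.2] : (0:ℝ) ≤ s - K))]
    exact tri_int1 h
  · rw [min_eq_left h, max_eq_right h]
    rw [setIntegral_congr_fun (g := fun K => K - s) measurableSet_Ico
      (fun K hK => by
        rw [abs_of_nonpos (by linarith [hK.1] : s - K ≤ 0)]; ring)]
    rw [tri_int2 h]
    ring

theorem modified_time_value_integrable
    (q : ℝ → ℝ) (hq_meas : Measurable q) (hq_nonneg : ∀ s, 0 ≤ q s)
    (hq_prob : ∫ s, q s = 1)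
    (hq_mean : Integrable (fun s => s * q s))
    (s₀ : ℝ) (hs₀ : s₀ = ∫ s, s * q s)
    (hvar : Integrable (fun s => (s - s₀) ^ 2 * q s))
    (z : ℝ → ℝ)
    (hz : ∀ K, z K = (∫ s, max (s - K) 0 * q s) - max (s₀ - K) 0) :
    Integrable z ∧ (∫ K, |z K|) ≤ (1 / 2) * ∫ s, (s - s₀) ^ 2 * q s := by
  -- q is integrable
  have hq_int : Integrable q := by
    by_contra h
    rw [integral_undef h] at hq_prob
    norm_num at hq_prob
  -- measurability of gg pieces
  have mgg : Measurable (fun p : ℝ × ℝ => gg s₀ p.2 p.1) := by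
    have h1 : Measurable (fun p : ℝ × ℝ => if p.1 < p.2 then (1:ℝ) else 0) :=
      Measurable.ite (measurableSet_lt measurable_fst measurable_snd)
        measurable_const measurable_const
    have h2 : Measurable (fun p : ℝ × ℝ => if p.1 < s₀ then (1:ℝ) else 0) :=
      Measurable.ite (measurableSet_lt measurable_fst measurable_const)
        measurable_const measurable_const
    exact (measurable_snd.sub measurable_fst).mul (h1.sub h2)
  have mggK : ∀ K : ℝ, Measurable (fun s => gg s₀ s K) :=
    fun K => mgg.comp (measurable_const.prodMk measurable_id)
  have mggS : ∀ s : ℝ, Measurable (fun K => gg s₀ s K) := by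
    intro s
    exact mgg.comp (measurable_id.prodMk measurable_const)
  -- integrability of (s - K) * q s in s
  have hint2 : ∀ K : ℝ, Integrable (fun s => (s - K) * q s) := by
    intro K
    have : (fun s => (s - K) * q s) = fun s => s * q s - K * q s := by
      funext s; ring
    rw [this]
    exact hq_mean.sub (hq_int.const_mul K)
  -- its integral
  have hB : ∀ K : ℝ, ∫ s, (s - K) * q s = s₀ - K := by
    intro K
    have : (fun s => (s - K) * q s) = fun s => s * q s - K * q s := by
      funext s; ring
    rw [this, integral_sub hq_mean (hq_int.const_mul K), integral_const_mul,
      hq_prob, ← hs₀]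
    ring
  -- integrability of max (s - K) 0 * q s
  have hint1 : ∀ K : ℝ, Integrable (fun s => max (s - K) 0 * q s) := by
    intro K
    refine Integrable.mono' (hq_mean.abs.add (hq_int.const_mul |K|))
      (((measurable_id.sub_const K).max measurable_const).mul hq_meas).aestronglyMeasurable
      (ae_of_all _ fun s => ?_)
    have h1 : |max (s - K) 0| ≤ |s| + |K| := by
      rw [abs_of_nonneg (le_max_right _ _)]
      refine max_le ?_ (by positivity)
      calc s - K ≤ |s - K| := le_abs_self _
        _ ≤ |s| + |K| := abs_sub _ _
    have h2 : |s * q s| = |s| * q s := by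
      rw [abs_mul, abs_of_nonneg (hq_nonneg s)]
    simp only [Pi.add_apply]
    rw [Real.norm_eq_abs, abs_mul, abs_of_nonneg (hq_nonneg s), h2]
    nlinarith [hq_nonneg s, abs_nonneg (max (s - K) 0), abs_nonneg s]
  -- representation of z
  have hzA : ∀ K, z K = ∫ s, gg s₀ s K * q s := by
    intro K
    rw [hz K]
    have hrw : (fun s => gg s₀ s K * q s) =
        fun s => max (s - K) 0 * q s - (if K < s₀ then (s - K) * q s else 0) :=
      funext fun s => gg_mul s₀ s K (q s)
    rw [hrw]
    by_cases hK : K < s₀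
    · simp only [if_pos hK]
      rw [integral_sub (hint1 K) (hint2 K), hB K,
        max_eq_left (sub_nonneg.2 hK.le)]
    · simp only [if_neg hK]
      rw [max_eq_right (sub_nonpos.2 (not_lt.1 hK))]
      simp
  -- strong measurability of z
  have hz_sm : StronglyMeasurable z := by
    have : z = fun K => ∫ s, (fun p : ℝ × ℝ => gg s₀ p.2 p.1 * q p.2) (K, s) :=
      funext fun K => hzA K
    rw [this]
    exact (mgg.mul (hq_meas.comp measurable_snd)).stronglyMeasurable.integral_prod_right'
  set V : ℝ := ∫ s, (s - s₀) ^ 2 * q s with hV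
  have hVnn : 0 ≤ V := integral_nonneg fun s => mul_nonneg (sq_nonneg _) (hq_nonneg s)
  -- inner lintegral computation
  have hinner : ∀ s : ℝ, (∫⁻ K, ENNReal.ofReal (|gg s₀ s K| * q s)) =
      ENNReal.ofReal ((s - s₀) ^ 2 / 2 * q s) := by
    intro s
    have h1 : ∀ K : ℝ, ENNReal.ofReal (|gg s₀ s K| * q s) =
        ENNReal.ofReal |gg s₀ s K| * ENNReal.ofReal (q s) :=
      fun K => ENNReal.ofReal_mul (abs_nonneg _)
    simp_rw [h1]
    rw [lintegral_mul_const _ ((mggS s).abs.ennreal_ofReal),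
      ← ofReal_integral_eq_lintegral_ofReal (absg_integrable s₀ s)
        (ae_of_all _ fun K => abs_nonneg _),
      absg_integral s₀ s, ← ENNReal.ofReal_mul (by positivity)]
  -- outer lintegral
  have houter : (∫⁻ s, ENNReal.ofReal ((s - s₀) ^ 2 / 2 * q s)) =
      ENNReal.ofReal ((1 / 2) * V) := by
    have hrw : (fun s => (s - s₀) ^ 2 / 2 * q s) =
        fun s => (1 / 2) * ((s - s₀) ^ 2 * q s) := by
      funext s; ring
    have hInt : Integrable (fun s => (s - s₀) ^ 2 / 2 * q s) := by
      rw [hrw]; exact hvar.const_mul _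
    rw [← ofReal_integral_eq_lintegral_ofReal hInt
      (ae_of_all _ fun s => mul_nonneg (by positivity) (hq_nonneg s))]
    congr 1
    rw [hrw, integral_const_mul]
  -- Tonelli
  have hswap : (∫⁻ K, ∫⁻ s, ENNReal.ofReal (|gg s₀ s K| * q s)) =
      ∫⁻ s, ∫⁻ K, ENNReal.ofReal (|gg s₀ s K| * q s) := by
    refine lintegral_lintegral_swap ?_
    exact ((mgg.abs.mul (hq_meas.comp measurable_snd)).ennreal_ofReal).aemeasurable
  have hfin : (∫⁻ K, ∫⁻ s, ENNReal.ofReal (|gg s₀ s K| * q s)) =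
      ENNReal.ofReal ((1 / 2) * V) := by
    rw [hswap, lintegral_congr fun s => hinner s, houter]
  -- pointwise bound
  have hptwise : ∀ K : ℝ, ENNReal.ofReal |z K| ≤
      ∫⁻ s, ENNReal.ofReal (|gg s₀ s K| * q s) := by
    intro K
    have hIntK : Integrable (fun s => |gg s₀ s K| * q s) := by
      refine Integrable.mono' (hint2 K).abs
        ((mggK K).abs.mul hq_meas).aestronglyMeasurable
        (ae_of_all _ fun s => ?_)
      have hle : |gg s₀ s K| ≤ |s - K| := by
        unfold gg
        rw [abs_mul]
        have : |(if K < s then (1:ℝ) else 0) - (if K < s₀ then 1 else 0)| ≤ 1 := by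
          by_cases h1 : K < s <;> by_cases h2 : K < s₀ <;> simp [h1, h2]
        nlinarith [abs_nonneg (s - K)]
      rw [Real.norm_eq_abs, abs_of_nonneg (mul_nonneg (abs_nonneg _) (hq_nonneg s)),
        abs_mul, abs_of_nonneg (hq_nonneg s)]
      exact mul_le_mul_of_nonneg_right hle (hq_nonneg s)
    have hle : |z K| ≤ ∫ s, |gg s₀ s K| * q s := by
      have h0 := norm_integral_le_integral_norm (μ := volume) (fun s => gg s₀ s K * q s)
      simp only [Real.norm_eq_abs, abs_mul] at h0
      have h1 : ∫ s, |gg s₀ s K| * |q s| = ∫ s, |gg s₀ s K| * q s := by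
        congr 1; funext s; rw [abs_of_nonneg (hq_nonneg s)]
      rw [hzA K]
      exact h0.trans_eq h1
    calc ENNReal.ofReal |z K| ≤ ENNReal.ofReal (∫ s, |gg s₀ s K| * q s) :=
          ENNReal.ofReal_le_ofReal hle
      _ = ∫⁻ s, ENNReal.ofReal (|gg s₀ s K| * q s) :=
          ofReal_integral_eq_lintegral_ofReal hIntK
            (ae_of_all _ fun s => mul_nonneg (abs_nonneg _) (hq_nonneg s))
  -- integrability of z
  have hz_int : Integrable z := by
    refine ⟨hz_sm.aestronglyMeasurable, ?_⟩
    rw [hasFiniteIntegral_iff_norm]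
    calc (∫⁻ K, ENNReal.ofReal ‖z K‖) = ∫⁻ K, ENNReal.ofReal |z K| := by
          simp [Real.norm_eq_abs]
      _ ≤ ∫⁻ K, ∫⁻ s, ENNReal.ofReal (|gg s₀ s K| * q s) :=
          lintegral_mono hptwise
      _ = ENNReal.ofReal ((1 / 2) * V) := hfin
      _ < ⊤ := ENNReal.ofReal_lt_top
  refine ⟨hz_int, ?_⟩
  rw [integral_eq_lintegral_of_nonneg_ae (ae_of_all _ fun K => abs_nonneg _)
    hz_int.abs.aestronglyMeasurable]
  have h1 : (∫⁻ K, ENNReal.ofReal |z K|) ≤ ENNReal.ofReal ((1 / 2) * V) :=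
    le_of_le_of_eq (lintegral_mono hptwise) hfin
  exact ENNReal.toReal_le_of_le_ofReal (by linarith) h1
end
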